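/- Let E be a finite-dimensional real vector space, Λ ⊆ E* a finite set of weights of a diagonalizable representation ρ of A = ℝ^m on a vector space V with weight space decomposition V = ⊕_{α∈Λ} V_α. Suppose K ⊆ V is a closed cone invariant under ρ(A), and u = Σ_α u_α ∈ K with u_λ ≠ 0 for an extremal weight λ ∈ Λ (i.e., there exists a ∈ A with λ(a) > α(a) for all α ≠ λ). Then u_λ ∈ K, so V_λ ∩ K ≠ {0}. -/

import Mathlib

open Real Matrix Filter Topology

theorem tendsto_sum_exp_mul_sub_smul {ι E : Type*} [Fintype ι] [TopologicalSpace E]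
    [AddCommMonoid E] [ContinuousAdd E] [Module ℝ E] [ContinuousSMul ℝ E]
    (c : ι → ℝ) (v : ι → E) (i₀ : ι) (hc : ∀ i, i ≠ i₀ → c i < c i₀) :
    Tendsto (fun t : ℝ => ∑ i, exp (t * (c i - c i₀)) • v i) atTop (𝓝 (v i₀)) := by
  classical
  have hterm : ∀ i, Tendsto (fun t : ℝ => exp (t * (c i - c i₀)) • v i) atTop
      (𝓝 (if i = i₀ then v i₀ else 0)) := by
    intro i
    by_cases h : i = i₀
    · subst h
      simp only [sub_self, mul_zero, exp_zero, one_smul]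
      exact tendsto_const_nhds
    · have hexp : Tendsto (fun t : ℝ => exp (t * (c i - c i₀))) atTop (𝓝 0) :=
        tendsto_exp_atBot.comp (tendsto_id.atTop_mul_const_of_neg (sub_neg.mpr (hc i h)))
      simpa [if_neg h] using hexp.smul_const (v i)
  simpa [Finset.sum_ite_eq'] using tendsto_finsetSum Finset.univ fun i _ => hterm i

theorem exp_neg_smul_apply_sum_eq {m : ℕ} {V ι : Type*} [AddCommGroup V] [Module ℝ V]
    [Fintype ι] (ρ : (Fin m → ℝ) → (V →ₗ[ℝ] V)) (w : ι → (Fin m → ℝ)) (u_ : ι → V)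
    (heig : ∀ (i : ι) (a : Fin m → ℝ), ρ a (u_ i) = exp (w i ⬝ᵥ a) • u_ i)
    (a : Fin m → ℝ) (r t : ℝ) :
    exp (-(t * r)) • ρ (t • a) (∑ i, u_ i) = ∑ i, exp (t * (w i ⬝ᵥ a - r)) • u_ i := by
  simp only [map_sum, heig, Finset.smul_sum, smul_smul, ← exp_add, dotProduct_smul,
    smul_eq_mul]
  congr! 3
  ring

theorem stmt2_general {m : ℕ} {V : Type*} [NormedAddCommGroup V] [NormedSpace ℝ V]
    {ι : Type*} [Fintype ι]
    (ρ : (Fin m → ℝ) → (V →ₗ[ℝ] V)) (w : ι → (Fin m → ℝ)) (u_ : ι → V)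
    (heig : ∀ (i : ι) (a : Fin m → ℝ), ρ a (u_ i) = Real.exp (w i ⬝ᵥ a) • u_ i)
    (K : Set V) (hKclosed : IsClosed K)
    (hKcone : ∀ (c : ℝ), 0 < c → ∀ x ∈ K, c • x ∈ K)
    (hKinv : ∀ (a : Fin m → ℝ), ∀ x ∈ K, ρ a x ∈ K)
    (hu : (∑ i, u_ i) ∈ K)
    (i₀ : ι)
    (a : Fin m → ℝ) (hextremal : ∀ i : ι, i ≠ i₀ → w i ⬝ᵥ a < w i₀ ⬝ᵥ a) :
    u_ i₀ ∈ K := by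
  have hlim := tendsto_sum_exp_mul_sub_smul (fun i => w i ⬝ᵥ a) u_ i₀ hextremal
  refine hKclosed.mem_of_tendsto hlim (Eventually.of_forall fun t => ?_)
  rw [← exp_neg_smul_apply_sum_eq ρ w u_ heig]
  exact hKcone _ (exp_pos _) _ (hKinv _ _ hu)

/-- Let `ρ` be a diagonalizable representation of `A = ℝ^m` on `V` with weight
space decomposition indexed by `ι` and weights `w i` (via the dot product pairing). If `K`
is a closed cone invariant under `ρ(A)` and `u = ∑ i, u_ i ∈ K` has nonzero component
`u_ i₀` for an extremal weight `w i₀`, then `u_ i₀ ∈ K`. -/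
theorem stmt2 {m : ℕ} {V : Type*} [NormedAddCommGroup V] [NormedSpace ℝ V]
    [FiniteDimensional ℝ V]
    {ι : Type*} [Fintype ι]
    (ρ : (Fin m → ℝ) → (V →ₗ[ℝ] V)) (w : ι → (Fin m → ℝ)) (u_ : ι → V)
    (heig : ∀ (i : ι) (a : Fin m → ℝ), ρ a (u_ i) = Real.exp (w i ⬝ᵥ a) • u_ i)
    (K : Set V) (hKclosed : IsClosed K)
    (hKcone : ∀ (c : ℝ), 0 < c → ∀ x ∈ K, c • x ∈ K)
    (hKinv : ∀ (a : Fin m → ℝ), ∀ x ∈ K, ρ a x ∈ K)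
    (hu : (∑ i, u_ i) ∈ K)
    (i₀ : ι) (hne : u_ i₀ ≠ 0)
    (a : Fin m → ℝ) (hextremal : ∀ i : ι, i ≠ i₀ → w i ⬝ᵥ a < w i₀ ⬝ᵥ a) :
    u_ i₀ ∈ K :=
  stmt2_general ρ w u_ heig K hKclosed hKcone hKinv hu i₀ a hextremal
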